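/- arXiv:2111.01313 — 9 statements merged into one kernel-verified Lean document; each statement's English description precedes it below -/
import Mathlib

section
/- Let β₁, β₂, β₃ be roots in a crystallographic root system such that β₁ + β₂ + β₃ is a root and β_i + β_j ≠ 0 for each distinct pair i, j. Then at least two of the three sums β₁ + β₂, β₁ + β₃, β₂ + β₃ are also roots. -/
/-!
If two of the sums, say `β₁ + β₃` and `β₂ + β₃`, were not roots, then the crystallographic
condition (applied to `β₁, -β₃`, to `β₂, -β₃`, and to `δ = β₁ + β₂ + β₃` against `β₁` and `β₂`)
would force `⟪β₁, β₃⟫ ≥ 0`, `⟪β₂, β₃⟫ ≥ 0`, `⟪δ, β₁⟫ ≤ 0` and `⟪δ, β₂⟫ ≤ 0`. Adding up gives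
`‖β₁ + β₂‖² = ⟪δ, β₁ + β₂⟫ - ⟪β₃, β₁ + β₂⟫ ≤ 0`, contradicting `β₁ + β₂ ≠ 0`.
-/

open scoped RealInnerProductSpace

section CrystallographicRootSet

variable {V : Type*} [NormedAddCommGroup V] [InnerProductSpace ℝ V] {Rt : Set V}

theorem inner_nonpos_of_sub_notMem
    (hcrys : ∀ β ∈ Rt, ∀ γ ∈ Rt, 0 < ⟪β, γ⟫ → β - γ ∈ Rt ∨ β - γ = 0)
    {β γ : V} (hβ : β ∈ Rt) (hγ : γ ∈ Rt) (hsub : β - γ ∉ Rt) (hsub0 : β - γ ≠ 0) :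
    ⟪β, γ⟫ ≤ 0 := by
  by_contra! hpos
  exact (hcrys β hβ γ hγ hpos).elim hsub hsub0

theorem inner_nonneg_of_add_notMem (hneg : ∀ β ∈ Rt, -β ∈ Rt)
    (hcrys : ∀ β ∈ Rt, ∀ γ ∈ Rt, 0 < ⟪β, γ⟫ → β - γ ∈ Rt ∨ β - γ = 0)
    {β γ : V} (hβ : β ∈ Rt) (hγ : γ ∈ Rt) (hadd : β + γ ∉ Rt) (hadd0 : β + γ ≠ 0) :
    0 ≤ ⟪β, γ⟫ := by
  rw [← sub_neg_eq_add] at hadd hadd0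
  have := inner_nonpos_of_sub_notMem hcrys hβ (hneg γ hγ) hadd hadd0
  rwa [inner_neg_right, neg_nonpos] at this

theorem add_mem_or_add_mem_of_add_add_mem (hneg : ∀ β ∈ Rt, -β ∈ Rt)
    (hcrys : ∀ β ∈ Rt, ∀ γ ∈ Rt, 0 < ⟪β, γ⟫ → β - γ ∈ Rt ∨ β - γ = 0)
    {β₁ β₂ β₃ : V} (hβ₁ : β₁ ∈ Rt) (hβ₂ : β₂ ∈ Rt) (hβ₃ : β₃ ∈ Rt)
    (hsum : β₁ + β₂ + β₃ ∈ Rt)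
    (h12 : β₁ + β₂ ≠ 0) (h13 : β₁ + β₃ ≠ 0) (h23 : β₂ + β₃ ≠ 0) :
    β₁ + β₃ ∈ Rt ∨ β₂ + β₃ ∈ Rt := by
  by_contra! ⟨h13Rt, h23Rt⟩
  have hsub₁ : β₁ + β₂ + β₃ - β₁ = β₂ + β₃ := by abel
  have hsub₂ : β₁ + β₂ + β₃ - β₂ = β₁ + β₃ := by abel
  have hδβ₁ := inner_nonpos_of_sub_notMem hcrys hsum hβ₁ (hsub₁ ▸ h23Rt) (hsub₁ ▸ h23)
  have hδβ₂ := inner_nonpos_of_sub_notMem hcrys hsum hβ₂ (hsub₂ ▸ h13Rt) (hsub₂ ▸ h13)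
  have hβ₁β₃ := inner_nonneg_of_add_notMem hneg hcrys hβ₁ hβ₃ h13Rt h13
  have hβ₂β₃ := inner_nonneg_of_add_notMem hneg hcrys hβ₂ hβ₃ h23Rt h23
  have hnorm : ⟪β₁ + β₂, β₁ + β₂⟫ ≤ 0 := by
    simp only [inner_add_left, inner_add_right] at hδβ₁ hδβ₂ ⊢
    linarith [real_inner_comm β₁ β₂, real_inner_comm β₁ β₃, real_inner_comm β₂ β₃]
  exact h12 (real_inner_self_nonpos.mp hnorm)

end CrystallographicRootSet

theorem two_of_three_pairwise_sums_are_roots_general {V : Type*} [NormedAddCommGroup V]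
    [InnerProductSpace ℝ V]
    (Rt : Set V)
    (hneg : ∀ β ∈ Rt, -β ∈ Rt)
    (hcrys : ∀ β ∈ Rt, ∀ γ ∈ Rt, 0 < (inner ℝ β γ : ℝ) → β - γ ∈ Rt ∨ β - γ = 0)
    (β₁ β₂ β₃ : V) (hβ₁ : β₁ ∈ Rt) (hβ₂ : β₂ ∈ Rt) (hβ₃ : β₃ ∈ Rt)
    (hsum : β₁ + β₂ + β₃ ∈ Rt)
    (h12 : β₁ + β₂ ≠ 0) (h13 : β₁ + β₃ ≠ 0) (h23 : β₂ + β₃ ≠ 0) :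
    (β₁ + β₂ ∈ Rt ∧ β₁ + β₃ ∈ Rt) ∨ (β₁ + β₂ ∈ Rt ∧ β₂ + β₃ ∈ Rt) ∨
      (β₁ + β₃ ∈ Rt ∧ β₂ + β₃ ∈ Rt) := by
  have h21 : β₂ + β₁ ≠ 0 := add_comm β₁ β₂ ▸ h12
  have h31 : β₃ + β₁ ≠ 0 := add_comm β₁ β₃ ▸ h13
  have h32 : β₃ + β₂ ≠ 0 := add_comm β₂ β₃ ▸ h23
  have hsum₁₃₂ : β₁ + β₃ + β₂ ∈ Rt := add_right_comm β₁ β₂ β₃ ▸ hsum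
  have hsum₂₃₁ : β₂ + β₃ + β₁ ∈ Rt := by rwa [add_comm, ← add_assoc]
  have hsplit₃ := add_mem_or_add_mem_of_add_add_mem hneg hcrys hβ₁ hβ₂ hβ₃ hsum h12 h13 h23
  have hsplit₂ := add_mem_or_add_mem_of_add_add_mem hneg hcrys hβ₁ hβ₃ hβ₂ hsum₁₃₂ h13 h12 h32
  have hsplit₁ := add_mem_or_add_mem_of_add_add_mem hneg hcrys hβ₂ hβ₃ hβ₁ hsum₂₃₁ h23 h21 h31
  rw [add_comm β₃ β₂] at hsplit₂
  rw [add_comm β₂ β₁, add_comm β₃ β₁] at hsplit₁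
  tauto

/-- If `β₁, β₂, β₃` are roots of a crystallographic root system with
`β₁ + β₂ + β₃` a root and `βᵢ + βⱼ ≠ 0` for all distinct pairs, then at least two of the
three pairwise sums are roots. -/
theorem two_of_three_pairwise_sums_are_roots {V : Type*} [NormedAddCommGroup V]
    [InnerProductSpace ℝ V]
    (Rt : Set V) (h0 : (0 : V) ∉ Rt)
    (hneg : ∀ β ∈ Rt, -β ∈ Rt)
    (hcrys : ∀ β ∈ Rt, ∀ γ ∈ Rt, 0 < (inner ℝ β γ : ℝ) → β - γ ∈ Rt ∨ β - γ = 0)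
    (β₁ β₂ β₃ : V) (hβ₁ : β₁ ∈ Rt) (hβ₂ : β₂ ∈ Rt) (hβ₃ : β₃ ∈ Rt)
    (hsum : β₁ + β₂ + β₃ ∈ Rt)
    (h12 : β₁ + β₂ ≠ 0) (h13 : β₁ + β₃ ≠ 0) (h23 : β₂ + β₃ ≠ 0) :
    (β₁ + β₂ ∈ Rt ∧ β₁ + β₃ ∈ Rt) ∨ (β₁ + β₂ ∈ Rt ∧ β₂ + β₃ ∈ Rt) ∨
      (β₁ + β₃ ∈ Rt ∧ β₂ + β₃ ∈ Rt) :=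
  two_of_three_pairwise_sums_are_roots_general Rt hneg hcrys β₁ β₂ β₃ hβ₁ hβ₂ hβ₃ hsum h12 h13 h23
end

section
/- Let β₁, …, β_m be roots in a crystallographic root system whose total sum γ = ∑_{i=1}^m β_i is a root. Then after reordering and possibly deleting some of the β_i, one obtains a sequence (β_{i₁}, …, β_{i_{m'}}) such that every partial sum ∑_{j=1}^k β_{i_j} (for 1 ≤ k ≤ m') is a root and the total sum equals γ. Moreover, if all β_i are positive (for a fixed choice of positive roots), then no deletions are needed, i.e., the sequence is a reordering of all the β_i. -/
/-- A summing sequence: every nonempty initial partial sum of the list is a root. -/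
def IsSummingSeq {V : Type*} [AddCommGroup V] (Rt : Set V) (l : List V) : Prop :=
  ∀ k, 1 ≤ k → k ≤ l.length → (l.take k).sum ∈ Rt

/-!
Let `γ = ∑ βᵢ` be a root. Since `0 < ⟪γ, γ⟫ = ∑ ⟪γ, βᵢ⟫`, some `βᵢ` has `0 < ⟪γ, βᵢ⟫`, so by
the crystallographic condition either `γ = βᵢ` or `γ - βᵢ` is a root. In the first case `[βᵢ]`
is a summing sequence; in the second, a summing sequence for the remaining terms (which sum to
`γ - βᵢ`) followed by `βᵢ` is one. The deleted terms sum to zero, so when all `βᵢ` are positive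
none of them can have been deleted.
-/

open scoped InnerProductSpace

theorem List.Subperm.perm_of_sum_map_eq {α M : Type*} [AddCommMonoid M] [PartialOrder M]
    [IsOrderedCancelAddMonoid M] {f : α → M} {l L : List α} (hsub : l.Subperm L)
    (hpos : ∀ x ∈ L, 0 < f x) (hsum : (l.map f).sum = (L.map f).sum) : l.Perm L := by
  obtain ⟨l', hl', hsub'⟩ := hsub
  obtain ⟨d, hd⟩ := hsub'.exists_perm_append
  have hd_sum : (d.map f).sum = 0 := by
    rw [(hd.map f).sum_eq, List.map_append, List.sum_append, (hl'.map f).sum_eq] at hsum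
    exact add_eq_left.mp hsum.symm
  have hd_nil : d = [] := by
    by_contra hne
    refine (List.sum_pos _ (fun y hy => ?_) (by simpa using hne)).ne' hd_sum
    obtain ⟨x, hx, rfl⟩ := List.mem_map.mp hy
    exact hpos x (hd.symm.subset (List.mem_append_right _ hx))
  rw [hd_nil, List.append_nil] at hd
  exact hl'.symm.trans hd.symm

theorem exists_mem_inner_pos_of_inner_sum_pos {V : Type*} [NormedAddCommGroup V]
    [InnerProductSpace ℝ V] {v : V} {L : List V} (h : 0 < ⟪v, L.sum⟫_ℝ) :
    ∃ x ∈ L, 0 < ⟪v, x⟫_ℝ := by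
  rw [← innerSL_apply_apply, map_list_sum] at h
  simpa using List.exists_lt_of_sum_lt (fun _ => (0 : ℝ)) (innerSL ℝ v) (by simpa using h)

namespace IsSummingSeq

variable {V : Type*} [AddCommGroup V] {Rt : Set V}

theorem nil : IsSummingSeq Rt [] := fun _ hk hlen => absurd (hk.trans hlen) (by simp)

theorem append_singleton {l : List V} {x : V} (hl : IsSummingSeq Rt l) (hx : l.sum + x ∈ Rt) :
    IsSummingSeq Rt (l ++ [x]) := by
  intro k hk hlen
  rcases le_or_gt k l.length with hkl | hlk
  · rw [List.take_append_of_le_length hkl]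
    exact hl k hk hkl
  · rw [List.take_of_length_le (by simpa using hlk)]
    simpa using hx

theorem singleton {x : V} (hx : x ∈ Rt) : IsSummingSeq Rt [x] :=
  nil.append_singleton (by simpa using hx)

end IsSummingSeq

theorem exists_subperm_isSummingSeq_sum_eq {V : Type*} [NormedAddCommGroup V]
    [InnerProductSpace ℝ V] {Rt : Set V} (h0 : (0 : V) ∉ Rt)
    (hcrys : ∀ β ∈ Rt, ∀ γ ∈ Rt, 0 < (inner ℝ β γ : ℝ) → β - γ ∈ Rt ∨ β - γ = 0)
    (L : List V) (hL : ∀ x ∈ L, x ∈ Rt) (hsum : L.sum ∈ Rt) :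
    ∃ l, l.Subperm L ∧ IsSummingSeq Rt l ∧ l.sum = L.sum := by
  classical
  obtain ⟨x, hxL, hx⟩ := exists_mem_inner_pos_of_inner_sum_pos
    (real_inner_self_pos.mpr (ne_of_mem_of_not_mem hsum h0))
  have hperm : L.Perm (x :: L.erase x) := List.perm_cons_erase hxL
  have hrest : (L.erase x).sum = L.sum - x := by
    rw [hperm.sum_eq, List.sum_cons, add_sub_cancel_left]
  rcases hcrys _ hsum x (hL x hxL) hx with hroot | hzero
  · have hshorter : (L.erase x).length < L.length := by
      rw [List.length_erase_of_mem hxL]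
      exact Nat.sub_lt (List.length_pos_of_mem hxL) Nat.one_pos
    obtain ⟨l, hsub, hl, hlsum⟩ := exists_subperm_isSummingSeq_sum_eq h0 hcrys (L.erase x)
      (fun y hy => hL y (List.mem_of_mem_erase hy)) (hrest ▸ hroot)
    refine ⟨l ++ [x], ?_, hl.append_singleton ?_, ?_⟩
    · exact (List.perm_append_singleton x l).subperm.trans
        ((List.subperm_cons x).mpr hsub |>.trans hperm.symm.subperm)
    · rwa [hlsum, hrest, sub_add_cancel]
    · rw [List.sum_append, hlsum, hrest, List.sum_singleton, sub_add_cancel]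
  · have hxγ : L.sum = x := sub_eq_zero.mp hzero
    exact ⟨[x], List.singleton_subperm_iff.mpr hxL, .singleton (hL x hxL), by simp [hxγ]⟩
termination_by L.length

theorem exists_summing_sequence_general {V : Type*} [NormedAddCommGroup V] [InnerProductSpace ℝ V]
    (Rt : Set V) (h0 : (0 : V) ∉ Rt)
    (hcrys : ∀ β ∈ Rt, ∀ γ ∈ Rt, 0 < (inner ℝ β γ : ℝ) → β - γ ∈ Rt ∨ β - γ = 0)
    (f : V →ₗ[ℝ] ℝ)
    (P : Set V) (hP : P = {β ∈ Rt | 0 < f β})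
    (m : ℕ) (β : Fin m → V) (hβ : ∀ i, β i ∈ Rt)
    (hsum : (∑ i, β i) ∈ Rt) :
    (∃ l : List V, l.Subperm (List.ofFn β) ∧ IsSummingSeq Rt l ∧ l.sum = ∑ i, β i) ∧
      ((∀ i, β i ∈ P) →
        ∃ l : List V, l.Perm (List.ofFn β) ∧ IsSummingSeq Rt l) := by
  rw [← List.sum_ofFn] at hsum ⊢
  have hroots : ∀ x ∈ List.ofFn β, x ∈ Rt := by
    simpa [List.mem_ofFn] using hβ
  obtain ⟨l, hsub, hl, hlsum⟩ := exists_subperm_isSummingSeq_sum_eq h0 hcrys _ hroots hsum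
  refine ⟨⟨l, hsub, hl, hlsum⟩, fun hpos => ⟨l, hsub.perm_of_sum_map_eq (f := f) ?_ ?_, hl⟩⟩
  · subst hP
    simpa [List.mem_ofFn] using fun i => (hpos i).2
  · rw [← map_list_sum, ← map_list_sum, hlsum]

/-- From roots `β₁, …, β_m` of a crystallographic root system whose total sum is
a root, one obtains by reordering and deleting a summing sequence with the same total sum;
if all the `β i` are positive, the sequence is in fact a reordering (no deletions needed). -/
theorem exists_summing_sequence {V : Type*} [NormedAddCommGroup V] [InnerProductSpace ℝ V]
    (Rt : Set V) (h0 : (0 : V) ∉ Rt)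
    (hneg : ∀ β ∈ Rt, -β ∈ Rt)
    (hcrys : ∀ β ∈ Rt, ∀ γ ∈ Rt, 0 < (inner ℝ β γ : ℝ) → β - γ ∈ Rt ∨ β - γ = 0)
    (f : V →ₗ[ℝ] ℝ) (hf : ∀ β ∈ Rt, f β ≠ 0)
    (P : Set V) (hP : P = {β ∈ Rt | 0 < f β})
    (m : ℕ) (β : Fin m → V) (hβ : ∀ i, β i ∈ Rt)
    (hsum : (∑ i, β i) ∈ Rt) :
    (∃ l : List V, l.Subperm (List.ofFn β) ∧ IsSummingSeq Rt l ∧ l.sum = ∑ i, β i) ∧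
      ((∀ i, β i ∈ P) →
        ∃ l : List V, l.Perm (List.ofFn β) ∧ IsSummingSeq Rt l) :=
  exists_summing_sequence_general Rt h0 hcrys f P hP m β hβ hsum
end

section
/- Let β₁, …, β_m be roots in a crystallographic root system, each lying in a convex subset 𝔑 of the roots, such that ∑_{i=1}^m β_i is a root. Then ∑_{i=1}^m β_i also lies in 𝔑. -/
/-!
A nonzero vector `S = ∑ βᵢ` has positive inner product with one of its summands, since
`‖S‖² = ∑ ⟪S, βᵢ⟫`. For such a summand `β`, the crystallographic condition makes `S - β` a root
(or zero, in which case `S = β`). By induction on the number of summands `S - β` then lies in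
`𝔑`, and `S = β + (S - β)` lies in `𝔑` by convexity.
-/

open Finset RealInnerProductSpace

section

variable {ι V : Type*} [NormedAddCommGroup V] [InnerProductSpace ℝ V]

theorem exists_mem_inner_sum_pos {s : Finset ι} {f : ι → V} (hs : ∑ i ∈ s, f i ≠ 0) :
    ∃ i ∈ s, 0 < ⟪∑ j ∈ s, f j, f i⟫ := by
  by_contra! h
  have hnonpos : ⟪∑ j ∈ s, f j, ∑ j ∈ s, f j⟫ ≤ 0 := by
    rw [inner_sum]
    exact sum_nonpos h
  exact hs (real_inner_self_nonpos.mp hnonpos)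

theorem Finset.sum_mem_of_add_mem {Rt N : Set V} (h0 : (0 : V) ∉ Rt)
    (hcrys : ∀ β ∈ Rt, ∀ γ ∈ Rt, 0 < ⟪β, γ⟫ → β - γ ∈ Rt ∨ β - γ = 0) (hNR : N ⊆ Rt)
    (hadd : ∀ β ∈ N, ∀ γ ∈ N, β + γ ∈ Rt → β + γ ∈ N)
    (f : ι → V) (s : Finset ι) (hf : ∀ i ∈ s, f i ∈ N) (hsum : ∑ i ∈ s, f i ∈ Rt) :
    ∑ i ∈ s, f i ∈ N := by
  classical
  induction s using Finset.strongInduction with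
  | H s ih =>
    have hne : ∑ i ∈ s, f i ≠ 0 := fun h => h0 (h ▸ hsum)
    obtain ⟨i, hi, hpos⟩ := exists_mem_inner_sum_pos hne
    have hiN := hf i hi
    have hrest : ∑ j ∈ s.erase i, f j = ∑ j ∈ s, f j - f i := sum_erase_eq_sub hi
    rcases hcrys _ hsum _ (hNR hiN) hpos with hroot | hzero
    · have hrestN : ∑ j ∈ s.erase i, f j ∈ N :=
        ih _ (erase_ssubset hi) (fun j hj => hf j (mem_of_mem_erase hj)) (hrest ▸ hroot)
      have hsplit : f i + ∑ j ∈ s.erase i, f j = ∑ j ∈ s, f j := add_sum_erase s f hi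
      exact hsplit ▸ hadd _ hiN _ hrestN (hsplit ▸ hsum)
    · rwa [sub_eq_zero.mp hzero]

end

theorem sum_mem_of_convex_general {V : Type*} [NormedAddCommGroup V] [InnerProductSpace ℝ V]
    (Rt : Set V) (h0 : (0 : V) ∉ Rt)
    (hcrys : ∀ β ∈ Rt, ∀ γ ∈ Rt, 0 < (inner ℝ β γ : ℝ) → β - γ ∈ Rt ∨ β - γ = 0)
    (N : Set V) (hNR : N ⊆ Rt)
    (hconv : ∀ β ∈ N, ∀ γ ∈ N, ∀ c₀ c₁ : ℝ, 0 < c₀ → 0 < c₁ →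
      c₀ • β + c₁ • γ ∈ Rt → c₀ • β + c₁ • γ ∈ N)
    (m : ℕ) (β : Fin m → V) (hβ : ∀ i, β i ∈ N)
    (hsum : (∑ i, β i) ∈ Rt) :
    (∑ i, β i) ∈ N := by
  have hadd : ∀ β ∈ N, ∀ γ ∈ N, β + γ ∈ Rt → β + γ ∈ N := fun β hβ γ hγ h => by
    simpa using hconv β hβ γ hγ 1 1 one_pos one_pos (by simpa using h)
  exact sum_mem_of_add_mem h0 hcrys hNR hadd β univ (fun i _ => hβ i) hsum

/-- If roots `β₁, …, β_m` all lie in a convex subset `N` of a crystallographic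
root system and their sum is a root, then the sum also lies in `N`. -/
theorem sum_mem_of_convex {V : Type*} [NormedAddCommGroup V] [InnerProductSpace ℝ V]
    (Rt : Set V) (h0 : (0 : V) ∉ Rt)
    (hneg : ∀ β ∈ Rt, -β ∈ Rt)
    (hcrys : ∀ β ∈ Rt, ∀ γ ∈ Rt, 0 < (inner ℝ β γ : ℝ) → β - γ ∈ Rt ∨ β - γ = 0)
    (N : Set V) (hNR : N ⊆ Rt)
    (hconv : ∀ β ∈ N, ∀ γ ∈ N, ∀ c₀ c₁ : ℝ, 0 < c₀ → 0 < c₁ →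
      c₀ • β + c₁ • γ ∈ Rt → c₀ • β + c₁ • γ ∈ N)
    (m : ℕ) (β : Fin m → V) (hβ : ∀ i, β i ∈ N)
    (hsum : (∑ i, β i) ∈ Rt) :
    (∑ i, β i) ∈ N :=
  sum_mem_of_convex_general Rt h0 hcrys N hNR hconv m β hβ hsum
end

section
/- Let β₀, β₁, γ₀, γ₁ be elements of a crystallographic root system which are each either a positive root or zero, and such that β₀ + β₁ = γ₀ + γ₁ is a positive root. Then there exist indices i, j ∈ {0,1} such that β_i − γ_j is either a positive root or zero. -/
/-!
Since `β₀ + β₁ = γ₀ + γ₁` is nonzero, `0 < ‖β₀ + β₁‖² = ⟪β₀ + β₁, γ₀ + γ₁⟫`, so some `⟪βᵢ, γⱼ⟫` is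
positive; in particular `βᵢ` and `γⱼ` are nonzero, hence positive roots, and `βᵢ - γⱼ` is a root or
zero. A root is positive or negative, and if `βᵢ - γⱼ` is negative then
`γⱼ - βᵢ = β₁₋ᵢ - γ₁₋ⱼ` is positive.
-/

open RealInnerProductSpace

section RootSystem

variable {V : Type*}

section PositiveRoots

variable [AddCommGroup V] [Module ℝ V]

def posRoots (Rt : Set V) (f : V →ₗ[ℝ] ℝ) : Set V := {β ∈ Rt | 0 < f β}

theorem mem_posRoots_or_neg_mem_posRoots {Rt : Set V} (hneg : ∀ β ∈ Rt, -β ∈ Rt)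
    {f : V →ₗ[ℝ] ℝ} (hf : ∀ β ∈ Rt, f β ≠ 0) {α : V} (hα : α ∈ Rt) :
    α ∈ posRoots Rt f ∨ -α ∈ posRoots Rt f := by
  rcases (hf α hα).lt_or_gt with hlt | hgt
  · exact Or.inr ⟨hneg α hα, by simpa using hlt⟩
  · exact Or.inl ⟨hα, hgt⟩

theorem ne_zero_of_mem_posRoots {Rt : Set V} {f : V →ₗ[ℝ] ℝ} {α : V} (hα : α ∈ posRoots Rt f) :
    α ≠ 0 := by
  rintro rfl
  simpa using hα.2

end PositiveRoots

theorem mem_of_mem_pair_of_ne_zero [Zero V] {S : Set V} {x₀ x₁ x : V} (h₀ : x₀ ∈ S ∨ x₀ = 0)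
    (h₁ : x₁ ∈ S ∨ x₁ = 0) (hx : x ∈ ({x₀, x₁} : Set V)) (hne : x ≠ 0) : x ∈ S := by
  rcases hx with rfl | rfl
  · exact h₀.resolve_right hne
  · exact h₁.resolve_right hne

theorem exists_sub_eq_sub_swap [AddCommGroup V] {β₀ β₁ γ₀ γ₁ b g : V}
    (heq : β₀ + β₁ = γ₀ + γ₁) (hb : b ∈ ({β₀, β₁} : Set V)) (hg : g ∈ ({γ₀, γ₁} : Set V)) :
    ∃ b' ∈ ({β₀, β₁} : Set V), ∃ g' ∈ ({γ₀, γ₁} : Set V), b' - g' = g - b := by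
  rcases hb with rfl | rfl <;> rcases hg with rfl | rfl
  · exact ⟨β₁, by simp, γ₁, by simp, by linear_combination (norm := abel) heq⟩
  · exact ⟨β₁, by simp, γ₀, by simp, by linear_combination (norm := abel) heq⟩
  · exact ⟨β₀, by simp, γ₁, by simp, by linear_combination (norm := abel) heq⟩
  · exact ⟨β₀, by simp, γ₀, by simp, by linear_combination (norm := abel) heq⟩

theorem exists_inner_pos_of_add_eq_add [NormedAddCommGroup V] [InnerProductSpace ℝ V]
    {β₀ β₁ γ₀ γ₁ : V} (heq : β₀ + β₁ = γ₀ + γ₁) (hne : β₀ + β₁ ≠ 0) :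
    ∃ b ∈ ({β₀, β₁} : Set V), ∃ g ∈ ({γ₀, γ₁} : Set V), 0 < ⟪b, g⟫ := by
  by_contra! hle
  simp only [Set.forall_mem_insert, Set.mem_singleton_iff, forall_eq] at hle
  have hsq : 0 < ⟪β₀ + β₁, γ₀ + γ₁⟫ := by
    rw [← heq]
    exact real_inner_self_pos.mpr hne
  simp only [inner_add_left, inner_add_right] at hsq
  linarith [hle.1.1, hle.1.2, hle.2.1, hle.2.2]

end RootSystem

theorem root_pairs_equality_general {V : Type*} [NormedAddCommGroup V] [InnerProductSpace ℝ V]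
    (Rt : Set V)
    (hneg : ∀ β ∈ Rt, -β ∈ Rt)
    (hcrys : ∀ β ∈ Rt, ∀ γ ∈ Rt, 0 < (inner ℝ β γ : ℝ) → β - γ ∈ Rt ∨ β - γ = 0)
    (f : V →ₗ[ℝ] ℝ) (hf : ∀ β ∈ Rt, f β ≠ 0)
    (P : Set V) (hP : P = {β ∈ Rt | 0 < f β})
    (β₀ β₁ γ₀ γ₁ : V)
    (hβ₀ : β₀ ∈ P ∨ β₀ = 0) (hβ₁ : β₁ ∈ P ∨ β₁ = 0)
    (hγ₀ : γ₀ ∈ P ∨ γ₀ = 0) (hγ₁ : γ₁ ∈ P ∨ γ₁ = 0)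
    (heq : β₀ + β₁ = γ₀ + γ₁) (hsum : β₀ + β₁ ∈ P) :
    ∃ b ∈ ({β₀, β₁} : Set V), ∃ g ∈ ({γ₀, γ₁} : Set V), b - g ∈ P ∨ b - g = 0 := by
  change P = posRoots Rt f at hP
  subst hP
  obtain ⟨b, hb, g, hg, hpos⟩ :=
    exists_inner_pos_of_add_eq_add heq (ne_zero_of_mem_posRoots hsum)
  have hbP : b ∈ posRoots Rt f :=
    mem_of_mem_pair_of_ne_zero hβ₀ hβ₁ hb (by rintro rfl; simp at hpos)
  have hgP : g ∈ posRoots Rt f :=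
    mem_of_mem_pair_of_ne_zero hγ₀ hγ₁ hg (by rintro rfl; simp at hpos)
  rcases hcrys b hbP.1 g hgP.1 hpos with hroot | hzero
  · rcases mem_posRoots_or_neg_mem_posRoots hneg hf hroot with hbg | hgb
    · exact ⟨b, hb, g, hg, Or.inl hbg⟩
    · obtain ⟨b', hb', g', hg', hswap⟩ := exists_sub_eq_sub_swap heq hb hg
      exact ⟨b', hb', g', hg', Or.inl (by rwa [hswap, ← neg_sub])⟩
  · exact ⟨b, hb, g, hg, Or.inr hzero⟩

/-- If `β₀, β₁, γ₀, γ₁` are each a positive root or zero, and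
`β₀ + β₁ = γ₀ + γ₁` is a positive root, then some difference `βᵢ - γⱼ` is a positive root
or zero. -/
theorem root_pairs_equality {V : Type*} [NormedAddCommGroup V] [InnerProductSpace ℝ V]
    (Rt : Set V) (h0 : (0 : V) ∉ Rt)
    (hneg : ∀ β ∈ Rt, -β ∈ Rt)
    (hcrys : ∀ β ∈ Rt, ∀ γ ∈ Rt, 0 < (inner ℝ β γ : ℝ) → β - γ ∈ Rt ∨ β - γ = 0)
    (f : V →ₗ[ℝ] ℝ) (hf : ∀ β ∈ Rt, f β ≠ 0)
    (P : Set V) (hP : P = {β ∈ Rt | 0 < f β})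
    (β₀ β₁ γ₀ γ₁ : V)
    (hβ₀ : β₀ ∈ P ∨ β₀ = 0) (hβ₁ : β₁ ∈ P ∨ β₁ = 0)
    (hγ₀ : γ₀ ∈ P ∨ γ₀ = 0) (hγ₁ : γ₁ ∈ P ∨ γ₁ = 0)
    (heq : β₀ + β₁ = γ₀ + γ₁) (hsum : β₀ + β₁ ∈ P) :
    ∃ b ∈ ({β₀, β₁} : Set V), ∃ g ∈ ({γ₀, γ₁} : Set V), b - g ∈ P ∨ b - g = 0 :=
  root_pairs_equality_general Rt hneg hcrys f hf P hP β₀ β₁ γ₀ γ₁ hβ₀ hβ₁ hγ₀ hγ₁ heq hsum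
end

section
/- Let β₀, …, β_m (m ≥ 0) and γ₀, γ₁ be positive roots in a crystallographic root system such that ∑_{i=0}^m β_i = γ₀ + γ₁ is a positive root. Then there exist an index 0 ≤ j ≤ m such that ∑_{i≠j} β_i is a positive root (or zero when m = 0), and some t ∈ {0,1} such that either ∑_{i≠j} β_i − γ_t or β_j − γ_t is a positive root or zero. -/
/-!
Write `α = ∑ βᵢ`. Since `‖α‖² = ∑ ⟪α, βⱼ⟫ > 0`, some `⟪α, βⱼ⟫` is positive, so `α - βⱼ` is a root
or zero; it is not zero when `m > 0` because it is a nonempty sum of positive roots.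
With `S = α - βⱼ`, the identity `S + βⱼ = γ₀ + γ₁` gives `⟪S + βⱼ, γ₀ + γ₁⟫ = ‖α‖² > 0`, so one of
the four pairings `⟪x, γₜ⟫` with `x ∈ {S, βⱼ}` is positive and `x - γₜ` is a root or zero. If that
root is negative, its negative is the complementary difference `y - γ₁₋ₜ`, with `{x, y} = {S, βⱼ}`.
-/

section

open Finset

variable {V : Type*} [NormedAddCommGroup V] [InnerProductSpace ℝ V]

theorem exists_inner_sum_pos_of_sum_ne_zero {ι : Type*} (s : Finset ι) (v : ι → V)
    (h : ∑ i ∈ s, v i ≠ 0) : ∃ i ∈ s, 0 < (inner ℝ (∑ j ∈ s, v j) (v i) : ℝ) := by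
  refine exists_lt_of_sum_lt ?_
  rw [sum_const_zero, ← inner_sum, real_inner_self_eq_norm_sq]
  positivity

theorem inner_pos_of_add_eq_add {a b c d : V} (h : a + b = c + d) (hcd : c + d ≠ 0) :
    0 < (inner ℝ a c : ℝ) ∨ 0 < (inner ℝ a d : ℝ) ∨
      0 < (inner ℝ b c : ℝ) ∨ 0 < (inner ℝ b d : ℝ) := by
  have hpos : 0 < (inner ℝ (a + b) (c + d) : ℝ) := by
    rw [h, real_inner_self_eq_norm_sq]
    positivity
  rw [inner_add_left, inner_add_right, inner_add_right] at hpos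
  by_contra! hneg
  linarith [hneg.1, hneg.2.1, hneg.2.2.1, hneg.2.2.2]

def positiveRoots (Rt : Set V) (f : V →ₗ[ℝ] ℝ) : Set V := {β ∈ Rt | 0 < f β}

section positiveRoots

variable {Rt : Set V} {f : V →ₗ[ℝ] ℝ}

theorem ne_zero_of_mem_positiveRoots {x : V} (hx : x ∈ positiveRoots Rt f) : x ≠ 0 :=
  fun h0 => (h0 ▸ hx.2).ne' (map_zero f)

theorem mem_positiveRoots_or_neg_mem (hneg : ∀ β ∈ Rt, -β ∈ Rt) (hf : ∀ β ∈ Rt, f β ≠ 0)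
    {x : V} (hx : x ∈ Rt) : x ∈ positiveRoots Rt f ∨ -x ∈ positiveRoots Rt f := by
  rcases (hf x hx).lt_or_gt with hlt | hgt
  · exact .inr ⟨hneg x hx, by rw [map_neg]; linarith⟩
  · exact .inl ⟨hx, hgt⟩

theorem sub_mem_positiveRoots_or_of_add_eq_add (hneg : ∀ β ∈ Rt, -β ∈ Rt)
    (hcrys : ∀ β ∈ Rt, ∀ γ ∈ Rt, 0 < (inner ℝ β γ : ℝ) → β - γ ∈ Rt ∨ β - γ = 0)
    (hf : ∀ β ∈ Rt, f β ≠ 0) {a b c d : V} (h : a + b = c + d) (ha : a ∈ Rt) (hc : c ∈ Rt)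
    (hac : 0 < (inner ℝ a c : ℝ)) :
    (a - c ∈ positiveRoots Rt f ∨ a - c = 0) ∨ b - d ∈ positiveRoots Rt f := by
  rcases hcrys a ha c hc hac with hmem | hzero
  · rcases mem_positiveRoots_or_neg_mem hneg hf hmem with hpos | hnegpos
    · exact .inl (.inl hpos)
    · have : -(a - c) = b - d := by rw [neg_sub, sub_eq_sub_iff_add_eq_add, ← h, add_comm b]
      exact .inr (this ▸ hnegpos)
  · exact .inl (.inr hzero)

theorem exists_sub_mem_positiveRoots_of_add_eq_add (hneg : ∀ β ∈ Rt, -β ∈ Rt)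
    (hcrys : ∀ β ∈ Rt, ∀ γ ∈ Rt, 0 < (inner ℝ β γ : ℝ) → β - γ ∈ Rt ∨ β - γ = 0)
    (hf : ∀ β ∈ Rt, f β ≠ 0) {a b c d : V} (h : a + b = c + d)
    (ha : a ∈ Rt ∨ a = 0) (hb : b ∈ Rt ∨ b = 0) (hc : c ∈ Rt) (hd : d ∈ Rt) (hcd : c + d ≠ 0) :
    ∃ t ∈ ({c, d} : Set V), (a - t ∈ positiveRoots Rt f ∨ a - t = 0) ∨
      (b - t ∈ positiveRoots Rt f ∨ b - t = 0) := by
  have mem_of_inner_pos : ∀ {x y : V}, x ∈ Rt ∨ x = 0 → 0 < (inner ℝ x y : ℝ) → x ∈ Rt :=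
    fun hx hxy => hx.resolve_right fun hx0 => by simp [hx0] at hxy
  rcases inner_pos_of_add_eq_add h hcd with hac | had | hbc | hbd
  · rcases sub_mem_positiveRoots_or_of_add_eq_add hneg hcrys hf
      h (mem_of_inner_pos ha hac) hc hac with h' | h'
    exacts [⟨c, .inl rfl, .inl h'⟩, ⟨d, .inr rfl, .inr (.inl h')⟩]
  · rcases sub_mem_positiveRoots_or_of_add_eq_add hneg hcrys hf
      (h.trans (add_comm c d)) (mem_of_inner_pos ha had) hd had with h' | h'
    exacts [⟨d, .inr rfl, .inl h'⟩, ⟨c, .inl rfl, .inr (.inl h')⟩]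
  · rcases sub_mem_positiveRoots_or_of_add_eq_add hneg hcrys hf
      ((add_comm b a).trans h) (mem_of_inner_pos hb hbc) hc hbc with h' | h'
    exacts [⟨c, .inl rfl, .inr h'⟩, ⟨d, .inr rfl, .inl (.inl h')⟩]
  · rcases sub_mem_positiveRoots_or_of_add_eq_add hneg hcrys hf
      ((add_comm b a).trans (h.trans (add_comm c d))) (mem_of_inner_pos hb hbd) hd
      hbd with h' | h'
    exacts [⟨d, .inr rfl, .inr h'⟩, ⟨c, .inl rfl, .inl (.inl h')⟩]

theorem exists_sum_erase_mem_positiveRoots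
    (hcrys : ∀ β ∈ Rt, ∀ γ ∈ Rt, 0 < (inner ℝ β γ : ℝ) → β - γ ∈ Rt ∨ β - γ = 0)
    {ι : Type*} [Fintype ι] [DecidableEq ι] [Nontrivial ι] (β : ι → V)
    (hβ : ∀ i, β i ∈ positiveRoots Rt f) (hsum : ∑ i, β i ∈ positiveRoots Rt f) :
    ∃ j, ∑ i ∈ univ.erase j, β i ∈ positiveRoots Rt f := by
  obtain ⟨j, -, hj⟩ :=
    exists_inner_sum_pos_of_sum_ne_zero univ β (ne_zero_of_mem_positiveRoots hsum)
  refine ⟨j, ?_⟩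
  have hfpos : 0 < f (∑ i ∈ univ.erase j, β i) := by
    rw [map_sum]
    exact sum_pos (fun i _ => (hβ i).2) ((erase_nonempty (mem_univ j)).2 univ_nontrivial)
  have herase : ∑ i ∈ univ.erase j, β i = ∑ i, β i - β j := sum_erase_eq_sub (mem_univ j)
  rcases hcrys _ hsum.1 _ (hβ j).1 hj with hmem | hzero
  · exact ⟨herase ▸ hmem, hfpos⟩
  · rw [herase, hzero, map_zero] at hfpos
    exact absurd hfpos (lt_irrefl 0)

end positiveRoots

end

theorem root_sum_split_general {V : Type*} [NormedAddCommGroup V] [InnerProductSpace ℝ V]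
    (Rt : Set V)
    (hneg : ∀ β ∈ Rt, -β ∈ Rt)
    (hcrys : ∀ β ∈ Rt, ∀ γ ∈ Rt, 0 < (inner ℝ β γ : ℝ) → β - γ ∈ Rt ∨ β - γ = 0)
    (f : V →ₗ[ℝ] ℝ) (hf : ∀ β ∈ Rt, f β ≠ 0)
    (P : Set V) (hP : P = {β ∈ Rt | 0 < f β})
    (m : ℕ) (β : Fin (m + 1) → V) (hβ : ∀ i, β i ∈ P)
    (γ₀ γ₁ : V) (hγ₀ : γ₀ ∈ P) (hγ₁ : γ₁ ∈ P)
    (heq : ∑ i, β i = γ₀ + γ₁) (hsum : (∑ i, β i) ∈ P) :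
    ∃ j : Fin (m + 1),
      ((∑ i ∈ Finset.univ.erase j, β i) ∈ P ∨
        (m = 0 ∧ (∑ i ∈ Finset.univ.erase j, β i) = 0)) ∧
      ∃ t ∈ ({γ₀, γ₁} : Set V),
        ((∑ i ∈ Finset.univ.erase j, β i) - t ∈ P ∨
            (∑ i ∈ Finset.univ.erase j, β i) - t = 0) ∨
          (β j - t ∈ P ∨ β j - t = 0) := by
  change P = positiveRoots Rt f at hP
  subst hP
  obtain ⟨j, hrest⟩ : ∃ j : Fin (m + 1), ∑ i ∈ Finset.univ.erase j, β i ∈ positiveRoots Rt f ∨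
      (m = 0 ∧ ∑ i ∈ Finset.univ.erase j, β i = 0) := by
    rcases m.eq_zero_or_pos with rfl | hm
    · exact ⟨0, .inr ⟨rfl, by simp⟩⟩
    · have : Nontrivial (Fin (m + 1)) := Fin.nontrivial_iff_two_le.2 (by omega)
      obtain ⟨j, hj⟩ := exists_sum_erase_mem_positiveRoots hcrys β hβ hsum
      exact ⟨j, .inl hj⟩
  refine ⟨j, hrest, exists_sub_mem_positiveRoots_of_add_eq_add hneg hcrys hf ?_ ?_ (.inl (hβ j).1)
    hγ₀.1 hγ₁.1 ?_⟩
  · rw [Finset.sum_erase_add _ _ (Finset.mem_univ j), heq]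
  · exact hrest.imp (·.1) (·.2)
  · exact heq ▸ ne_zero_of_mem_positiveRoots hsum

/-- If positive roots `β₀, …, β_m` satisfy `∑ βᵢ = γ₀ + γ₁`, a positive root,
then for some `j` the smaller sum `∑_{i ≠ j} βᵢ` is a positive root (or zero when `m = 0`),
and for some `t ∈ {γ₀, γ₁}` either `∑_{i ≠ j} βᵢ - t` or `βⱼ - t` is a positive root or
zero. -/
theorem root_sum_split {V : Type*} [NormedAddCommGroup V] [InnerProductSpace ℝ V]
    (Rt : Set V) (h0 : (0 : V) ∉ Rt)
    (hneg : ∀ β ∈ Rt, -β ∈ Rt)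
    (hcrys : ∀ β ∈ Rt, ∀ γ ∈ Rt, 0 < (inner ℝ β γ : ℝ) → β - γ ∈ Rt ∨ β - γ = 0)
    (f : V →ₗ[ℝ] ℝ) (hf : ∀ β ∈ Rt, f β ≠ 0)
    (P : Set V) (hP : P = {β ∈ Rt | 0 < f β})
    (m : ℕ) (β : Fin (m + 1) → V) (hβ : ∀ i, β i ∈ P)
    (γ₀ γ₁ : V) (hγ₀ : γ₀ ∈ P) (hγ₁ : γ₁ ∈ P)
    (heq : ∑ i, β i = γ₀ + γ₁) (hsum : (∑ i, β i) ∈ P) :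
    ∃ j : Fin (m + 1),
      ((∑ i ∈ Finset.univ.erase j, β i) ∈ P ∨
        (m = 0 ∧ (∑ i ∈ Finset.univ.erase j, β i) = 0)) ∧
      ∃ t ∈ ({γ₀, γ₁} : Set V),
        ((∑ i ∈ Finset.univ.erase j, β i) - t ∈ P ∨
            (∑ i ∈ Finset.univ.erase j, β i) - t = 0) ∨
          (β j - t ∈ P ∨ β j - t = 0) :=
  root_sum_split_general Rt hneg hcrys f hf P hP m β hβ γ₀ γ₁ hγ₀ hγ₁ heq hsum
end

section
/- Let w be an element of a finite Weyl group and let y be another element with inversion sets 𝔯_w ⊆ 𝔯_y (i.e., y ≥ w in the weak left order). Then the set 𝔯_y satisfies w(𝔯_y \ 𝔯_w) ∩ (positive roots) = 𝔯_{y w⁻¹}, where y w⁻¹ has reduced decomposition. In particular, 𝔯_y is w-nimble (i.e., contains 𝔯_w and satisfies w(𝔯_y \ 𝔯_w) ⊆ 𝔯_y) if and only if y ≥ w and y ≥ y w⁻¹ in the weak left Bruhat order. -/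
/-!
For `β ∈ 𝔯_y \ 𝔯_w` both `β` and `wβ` are positive, so `w(𝔯_y \ 𝔯_w)` consists of positive
roots `γ = wβ` with `y w⁻¹ γ = y β` negative, i.e. lies in `𝔯_{y w⁻¹}`. Conversely, for
`γ ∈ 𝔯_{y w⁻¹}` the root `β = w⁻¹γ` must be positive: otherwise `-β ∈ 𝔯_w ⊆ 𝔯_y`, so `yβ`
would be positive, contradicting that `yβ = y w⁻¹ γ` is negative. Once
`w(𝔯_y \ 𝔯_w) = 𝔯_{y w⁻¹}`, the nimbleness criterion is a rewrite.
-/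

/-- The inversion set of a Weyl group element `w`: positive roots sent to negative roots. -/
def invSet {V : Type*} [AddCommGroup V] [Module ℝ V] (P : Set V) (w : V ≃ₗ[ℝ] V) : Set V :=
  {β ∈ P | w β ∉ P}

section InversionSets

variable {V : Type*} [AddCommGroup V] [Module ℝ V] {P : Set V}

theorem neg_mem_sep_pos_iff {Rt : Set V} (hneg : ∀ β ∈ Rt, -β ∈ Rt) {f : V →ₗ[ℝ] ℝ}
    (hf : ∀ β ∈ Rt, f β ≠ 0) {β : V} (hβ : β ∈ Rt) :
    -β ∈ {γ ∈ Rt | 0 < f γ} ↔ β ∉ {γ ∈ Rt | 0 < f γ} := by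
  simp only [Set.mem_ofPred_eq, map_neg, neg_pos, hneg β hβ, hβ, true_and, not_lt]
  exact ⟨le_of_lt, fun h => lt_of_le_of_ne h (hf β hβ)⟩

theorem image_diff_invSet_subset (w y : V ≃ₗ[ℝ] V) :
    ⇑w '' (invSet P y \ invSet P w) ⊆ P := by
  rintro _ ⟨β, ⟨⟨hβP, -⟩, hβw⟩, rfl⟩
  by_contra hwβ
  exact hβw ⟨hβP, hwβ⟩

theorem image_diff_invSet_subset_invSet_symm_trans (w y : V ≃ₗ[ℝ] V) :
    ⇑w '' (invSet P y \ invSet P w) ⊆ invSet P (w.symm.trans y) := by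
  rintro _ ⟨β, hβ, rfl⟩
  exact ⟨image_diff_invSet_subset w y ⟨β, hβ, rfl⟩, by simpa using hβ.1.2⟩

theorem invSet_symm_trans_subset_image_diff {Rt : Set V} (hPRt : P ⊆ Rt)
    (hnegP : ∀ β ∈ Rt, -β ∈ P ↔ β ∉ P)
    {w y : V ≃ₗ[ℝ] V} (hw' : ∀ β ∈ Rt, w.symm β ∈ Rt) (hy : ∀ β ∈ Rt, y β ∈ Rt)
    (hwy : invSet P w ⊆ invSet P y) :
    invSet P (w.symm.trans y) ⊆ ⇑w '' (invSet P y \ invSet P w) := by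
  rintro γ ⟨hγP, hyγ⟩
  obtain ⟨β, rfl⟩ := w.surjective γ
  have hyβ : y β ∉ P := by simpa using hyγ
  have hβRt : β ∈ Rt := by simpa using hw' _ (hPRt hγP)
  have hβP : β ∈ P := by
    by_contra hβP
    have hnegβ : -β ∈ invSet P w := by
      refine ⟨(hnegP β hβRt).2 hβP, ?_⟩
      rw [map_neg, hnegP _ (hPRt hγP)]
      exact not_not_intro hγP
    have hnegyβ : -y β ∉ P := by simpa using (hwy hnegβ).2
    exact hnegyβ ((hnegP _ (hy β hβRt)).2 hyβ)
  exact ⟨β, ⟨⟨hβP, hyβ⟩, fun hβw => hβw.2 hγP⟩, rfl⟩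

theorem image_diff_invSet_eq_invSet_symm_trans {Rt : Set V} (hPRt : P ⊆ Rt)
    (hnegP : ∀ β ∈ Rt, -β ∈ P ↔ β ∉ P)
    {w y : V ≃ₗ[ℝ] V} (hw' : ∀ β ∈ Rt, w.symm β ∈ Rt) (hy : ∀ β ∈ Rt, y β ∈ Rt)
    (hwy : invSet P w ⊆ invSet P y) :
    ⇑w '' (invSet P y \ invSet P w) = invSet P (w.symm.trans y) :=
  (image_diff_invSet_subset_invSet_symm_trans w y).antisymm
    (invSet_symm_trans_subset_image_diff hPRt hnegP hw' hy hwy)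

end InversionSets

theorem invSet_nimble_iff_general {V : Type*} [NormedAddCommGroup V] [InnerProductSpace ℝ V]
    (Rt : Set V)
    (hneg : ∀ β ∈ Rt, -β ∈ Rt)
    (f : V →ₗ[ℝ] ℝ) (hf : ∀ β ∈ Rt, f β ≠ 0)
    (P : Set V) (hP : P = {β ∈ Rt | 0 < f β})
    (w : V ≃ₗ[ℝ] V) (hw' : ∀ β ∈ Rt, w.symm β ∈ Rt)
    (y : V ≃ₗ[ℝ] V) (hy : ∀ β ∈ Rt, y β ∈ Rt)
    (hwy : invSet P w ⊆ invSet P y) :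
    (⇑w '' (invSet P y \ invSet P w)) ∩ P = invSet P (w.symm.trans y) ∧
      ((invSet P w ⊆ invSet P y ∧ ⇑w '' (invSet P y \ invSet P w) ⊆ invSet P y) ↔
        (invSet P w ⊆ invSet P y ∧ invSet P (w.symm.trans y) ⊆ invSet P y)) := by
  have hPRt : P ⊆ Rt := hP ▸ Set.sep_subset _ _
  have hnegP : ∀ β ∈ Rt, -β ∈ P ↔ β ∉ P := hP ▸ fun β hβ => neg_mem_sep_pos_iff hneg hf hβ
  have himage := image_diff_invSet_eq_invSet_symm_trans hPRt hnegP hw' hy hwy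
  refine ⟨?_, by rw [himage]⟩
  rw [Set.inter_eq_left.2 (image_diff_invSet_subset w y), himage]

/-- Let `w, y` be elements of a finite Weyl group with `𝔯_w ⊆ 𝔯_y` (i.e.
`y ≥ w` in the weak left order).  Then `w(𝔯_y \ 𝔯_w) ∩ 𝔯₊ = 𝔯_{y w⁻¹}`, and `𝔯_y` is
`w`-nimble if and only if `y ≥ w` and `y ≥ y w⁻¹` in the weak left order (weak left order
being inclusion of inversion sets). -/
theorem invSet_nimble_iff {V : Type*} [NormedAddCommGroup V] [InnerProductSpace ℝ V]
    (Rt : Set V) (hfin : Rt.Finite) (h0 : (0 : V) ∉ Rt)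
    (hneg : ∀ β ∈ Rt, -β ∈ Rt)
    (hcrys : ∀ β ∈ Rt, ∀ γ ∈ Rt, 0 < (inner ℝ β γ : ℝ) → β - γ ∈ Rt ∨ β - γ = 0)
    (hspan : Submodule.span ℝ Rt = ⊤)
    (f : V →ₗ[ℝ] ℝ) (hf : ∀ β ∈ Rt, f β ≠ 0)
    (P : Set V) (hP : P = {β ∈ Rt | 0 < f β})
    (w : V ≃ₗ[ℝ] V) (hw : ∀ β ∈ Rt, w β ∈ Rt) (hw' : ∀ β ∈ Rt, w.symm β ∈ Rt)
    (y : V ≃ₗ[ℝ] V) (hy : ∀ β ∈ Rt, y β ∈ Rt) (hy' : ∀ β ∈ Rt, y.symm β ∈ Rt)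
    (hwy : invSet P w ⊆ invSet P y) :
    (⇑w '' (invSet P y \ invSet P w)) ∩ P = invSet P (w.symm.trans y) ∧
      ((invSet P w ⊆ invSet P y ∧ ⇑w '' (invSet P y \ invSet P w) ⊆ invSet P y) ↔
        (invSet P w ⊆ invSet P y ∧ invSet P (w.symm.trans y) ⊆ invSet P y)) :=
  invSet_nimble_iff_general Rt hneg f hf P hP w hw' y hy hwy
end

section
/- Let w be an element of a finite Weyl group and 𝔑 a w-nimble subset of positive roots that also contains the inversion set 𝔯_{w⁻¹}. Then 𝔑 is also nimble for w⁻¹, i.e., 𝔯_{w⁻¹} ⊆ 𝔑 and w⁻¹(𝔑 \ 𝔯_{w⁻¹}) ⊆ 𝔑. -/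
open Function Set

theorem Set.MapsTo.exists_iterate_eq_symm_apply {α : Type*} {s : Set α} (hs : s.Finite)
    {e : α ≃ α} (he : MapsTo e s s) {x : α} (hx : x ∈ s) : ∃ k, e^[k] x = e.symm x := by
  have : Finite s := hs.to_subtype
  obtain ⟨n, hn, hper⟩ :=
    (he.restrict_inj.mpr e.injective.injOn).mem_periodicPts ⟨x, hx⟩
  obtain ⟨k, rfl⟩ := Nat.exists_eq_add_one_of_ne_zero hn.ne'
  refine ⟨k, e.injective ?_⟩
  rw [e.apply_symm_apply, ← iterate_succ_apply' e]
  exact (he.coe_iterate_restrict ⟨x, hx⟩ (k + 1)).symm.trans (congrArg Subtype.val hper.eq)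

theorem iterate_mem_of_nimble {V : Type*} [AddCommGroup V] [Module ℝ V] {P N : Set V}
    {w : V ≃ₗ[ℝ] V} (hN : w '' (N \ invSet P w) ⊆ N) (hNinv : invSet P w.symm ⊆ N)
    {β : V} (hβ : β ∈ N) (k : ℕ) (hk : w^[k] β ∈ P) : w^[k] β ∈ N := by
  induction k with
  | zero => exact hβ
  | succ k ih =>
    rw [iterate_succ_apply'] at hk ⊢
    by_cases hkP : w^[k] β ∈ P
    · exact hN ⟨_, ⟨ih hkP, fun h => h.2 hk⟩, rfl⟩
    · exact hNinv ⟨hk, by rwa [LinearEquiv.symm_apply_apply]⟩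

theorem nimble_inverse_general {V : Type*} [NormedAddCommGroup V] [InnerProductSpace ℝ V]
    (Rt : Set V) (hfin : Rt.Finite)
    (f : V →ₗ[ℝ] ℝ)
    (P : Set V) (hP : P = {β ∈ Rt | 0 < f β})
    (w : V ≃ₗ[ℝ] V) (hw : ∀ β ∈ Rt, w β ∈ Rt)
    (N : Set V) (hNP : N ⊆ P)
    (hNnimble : ⇑w '' (N \ invSet P w) ⊆ N)
    (hNwinv : invSet P w.symm ⊆ N) :
    invSet P w.symm ⊆ N ∧ ⇑w.symm '' (N \ invSet P w.symm) ⊆ N := by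
  refine ⟨hNwinv, ?_⟩
  rintro _ ⟨β, ⟨hβN, hβinv⟩, rfl⟩
  have hβP : β ∈ P := hNP hβN
  have hβRt : β ∈ Rt := (hP ▸ hβP).1
  have hsymmP : w.symm β ∈ P := by_contra fun h => hβinv ⟨hβP, h⟩
  obtain ⟨k, hk⟩ := MapsTo.exists_iterate_eq_symm_apply hfin (e := w.toEquiv) hw hβRt
  change w^[k] β = w.symm β at hk
  rw [← hk] at hsymmP ⊢
  exact iterate_mem_of_nimble hNnimble hNwinv hβN k hsymmP

/-- If `𝔑` is a `w`-nimble subset of positive roots (it contains `𝔯_w` and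
`w(𝔑 \ 𝔯_w) ⊆ 𝔑`) that also contains `𝔯_{w⁻¹}`, then `𝔑` is also nimble for `w⁻¹`. -/
theorem nimble_inverse {V : Type*} [NormedAddCommGroup V] [InnerProductSpace ℝ V]
    (Rt : Set V) (hfin : Rt.Finite) (h0 : (0 : V) ∉ Rt)
    (hneg : ∀ β ∈ Rt, -β ∈ Rt)
    (hcrys : ∀ β ∈ Rt, ∀ γ ∈ Rt, 0 < (inner ℝ β γ : ℝ) → β - γ ∈ Rt ∨ β - γ = 0)
    (hspan : Submodule.span ℝ Rt = ⊤)
    (f : V →ₗ[ℝ] ℝ) (hf : ∀ β ∈ Rt, f β ≠ 0)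
    (P : Set V) (hP : P = {β ∈ Rt | 0 < f β})
    (w : V ≃ₗ[ℝ] V) (hw : ∀ β ∈ Rt, w β ∈ Rt) (hw' : ∀ β ∈ Rt, w.symm β ∈ Rt)
    (N : Set V) (hNP : N ⊆ P)
    (hNw : invSet P w ⊆ N) (hNnimble : ⇑w '' (N \ invSet P w) ⊆ N)
    (hNwinv : invSet P w.symm ⊆ N) :
    invSet P w.symm ⊆ N ∧ ⇑w.symm '' (N \ invSet P w.symm) ⊆ N :=
  nimble_inverse_general Rt hfin f P hP w hw N hNP hNnimble hNwinv
end

section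
/- Let w be an element of a finite Weyl group, 𝔑 a convex set of positive roots containing 𝔯_w, and 𝔏 ⊆ 𝔯 \ 𝔑 a subset of roots satisfying w(𝔏) = 𝔏 = −𝔏 and such that 𝔏 ⊔ 𝔯_w is convex. Then cross_w(𝔑) ∩ 𝔏 = ∅ and Cross_w(𝔑) ∩ 𝔏 = ∅. -/
/-- `crossSet P w β` is the set `{ w(β + ∑ βᵢ) : βᵢ ∈ invSet } ∩ P`. -/
def crossSet {V : Type*} [AddCommGroup V] [Module ℝ V] (P : Set V) (w : V ≃ₗ[ℝ] V)
    (β : V) : Set V :=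
  {γ | γ ∈ P ∧ ∃ (n : ℕ) (b : Fin n → V),
    (∀ i, b i ∈ invSet P w) ∧ γ = w (β + ∑ i, b i)}

/-- The extension of `crossSet` to sets of positive roots, by taking unions. -/
def crossIter {V : Type*} [AddCommGroup V] [Module ℝ V] (P : Set V) (w : V ≃ₗ[ℝ] V)
    (N : Set V) : Set V :=
  ⋃ β ∈ N, crossSet P w β

/-- `N + L`: roots which are positive linear combinations of a member of `N` and
a member of `L`, together with `N` itself. -/
def plusSet {V : Type*} [AddCommGroup V] [Module ℝ V] (Rt N L : Set V) : Set V :=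
  {v ∈ Rt | ∃ β₀ ∈ N, ∃ β₁ ∈ L, ∃ c₀ c₁ : ℝ, 0 < c₀ ∧ 0 < c₁ ∧ v = c₀ • β₀ + c₁ • β₁} ∪ N

/-- `Cross_w(N) = w(N + 𝔯_w) ∩ (positive roots)`. -/
def CrossSet {V : Type*} [AddCommGroup V] [Module ℝ V] (Rt P : Set V) (w : V ≃ₗ[ℝ] V)
    (N : Set V) : Set V :=
  (⇑w '' plusSet Rt N (invSet P w)) ∩ P

/-- A subset of roots is convex if it is closed under taking roots which are positive
linear combinations of two of its members. -/
def ConvexRoots {V : Type*} [AddCommGroup V] [Module ℝ V] (Rt S : Set V) : Prop :=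
  ∀ β ∈ S, ∀ γ ∈ S, ∀ c₀ c₁ : ℝ, 0 < c₀ → 0 < c₁ →
    c₀ • β + c₁ • γ ∈ Rt → c₀ • β + c₁ • γ ∈ S


/-!
If `γ = w(v)` lies in `𝔏`, then so do `v` and `-v`, since `w(𝔏) = 𝔏 = -𝔏`. For
`v = β + ∑ βᵢ` with `β ∈ 𝔑` and `βᵢ ∈ 𝔯_w` (and likewise for `v = c₀β + c₁β₁`), the root
`-β` is then a positive combination of `-v ∈ 𝔏` and of members of `𝔯_w`, so it lies in the
convex set `𝔏 ⊔ 𝔯_w`; for sums of several roots this uses that in a crystallographic root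
system some summand can always be split off while leaving a root. As `-β` is negative, it
is not in `𝔯_w`, so `-β ∈ 𝔏`, whence `β ∈ 𝔏`, contradicting `𝔏 ∩ 𝔑 = ∅`.
-/

section Leavener

variable {V : Type*} [AddCommGroup V] [Module ℝ V] {Rt P N L : Set V} {w : V ≃ₗ[ℝ] V}

theorem invSet_subset (P : Set V) (w : V ≃ₗ[ℝ] V) : invSet P w ⊆ P := fun _ hβ => hβ.1

theorem mem_of_neg_mem_union_invSet (hPneg : ∀ β ∈ P, -β ∉ P)
    (hLneg : ∀ β, β ∈ L ↔ -β ∈ L) {β : V} (hβ : β ∈ P) (h : -β ∈ L ∪ invSet P w) : β ∈ L := by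
  rcases h with hL | hinv
  · exact (hLneg β).2 hL
  · exact absurd (invSet_subset P w hinv) (hPneg β hβ)

theorem CrossSet_inter_eq_empty (hneg : ∀ β ∈ Rt, -β ∈ Rt) (hPRt : P ⊆ Rt)
    (hPneg : ∀ β ∈ P, -β ∉ P) (hNP : N ⊆ P) (hL : L ⊆ Rt \ N) (hLw : ⇑w '' L = L)
    (hLneg : ∀ β, β ∈ L ↔ -β ∈ L) (hLRw : ConvexRoots Rt (L ∪ invSet P w)) :
    CrossSet Rt P w N ∩ L = ∅ := by
  refine Set.eq_empty_of_forall_notMem ?_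
  rintro _ ⟨⟨⟨v, hv, rfl⟩, -⟩, hwv⟩
  have hvL : v ∈ L := w.injective.mem_set_image.1 (by rwa [hLw])
  rcases hv with ⟨-, β₀, hβ₀, β₁, hβ₁, c₀, c₁, hc₀, hc₁, rfl⟩ | hvN
  · have hkey : (1 / c₀) • -(c₀ • β₀ + c₁ • β₁) + (c₁ / c₀) • β₁ = -β₀ := by
      rw [smul_neg, smul_add, smul_smul, smul_smul, one_div, inv_mul_cancel₀ hc₀.ne',
        inv_mul_eq_div]
      module
    have hβ₀L : -β₀ ∈ L ∪ invSet P w := hkey ▸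
      hLRw _ (Or.inl ((hLneg _).1 hvL)) _ (Or.inr hβ₁) _ _ (by positivity) (by positivity)
        (hkey ▸ hneg _ (hPRt (hNP hβ₀)))
    exact (hL (mem_of_neg_mem_union_invSet hPneg hLneg (hNP hβ₀) hβ₀L)).2 hβ₀
  · exact (hL hvL).2 hvN

end Leavener

section RootSums

variable {V : Type*} [NormedAddCommGroup V] [InnerProductSpace ℝ V] {Rt P N L : Set V}
  {w : V ≃ₗ[ℝ] V}

theorem exists_inner_sum_pos {ι : Type*} [Fintype ι] (a : ι → V) (h : ∑ i, a i ≠ 0) :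
    ∃ i, 0 < (inner ℝ (∑ j, a j) (a i) : ℝ) := by
  by_contra! hle
  have hself : (inner ℝ (∑ j, a j) (∑ i, a i) : ℝ) ≤ 0 := by
    rw [inner_sum]
    exact Finset.sum_nonpos fun i _ => hle i
  exact h (real_inner_self_nonpos.1 hself)

theorem ConvexRoots.sum_mem {S : Set V} (hS : ConvexRoots Rt S) (h0 : (0 : V) ∉ Rt)
    (hcrys : ∀ β ∈ Rt, ∀ γ ∈ Rt, 0 < (inner ℝ β γ : ℝ) → β - γ ∈ Rt ∨ β - γ = 0) :
    ∀ {k : ℕ} (a : Fin (k + 1) → V), (∀ i, a i ∈ S) → (∀ i, a i ∈ Rt) →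
      ∑ i, a i ∈ Rt → ∑ i, a i ∈ S := by
  intro k
  induction k with
  | zero => exact fun a haS _ _ => by simpa using haS 0
  | succ k ih =>
    intro a haS haRt hsum
    obtain ⟨i, hi⟩ := exists_inner_sum_pos a fun h => h0 (h ▸ hsum)
    have hrest : ∑ j, a j - a i = ∑ j, a (i.succAbove j) := by
      rw [Fin.sum_univ_succAbove a i]
      abel
    rcases hcrys _ hsum _ (haRt i) hi with hrestRt | hzero
    · have hrestS : ∑ j, a j - a i ∈ S :=
        hrest ▸ ih _ (fun j => haS _) (fun j => haRt _) (hrest ▸ hrestRt)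
      simpa using hS _ hrestS _ (haS i) 1 1 one_pos one_pos (by simpa using hsum)
    · rw [sub_eq_zero.1 hzero]
      exact haS i

theorem crossIter_inter_eq_empty (h0 : (0 : V) ∉ Rt) (hneg : ∀ β ∈ Rt, -β ∈ Rt)
    (hcrys : ∀ β ∈ Rt, ∀ γ ∈ Rt, 0 < (inner ℝ β γ : ℝ) → β - γ ∈ Rt ∨ β - γ = 0)
    (hPRt : P ⊆ Rt) (hPneg : ∀ β ∈ P, -β ∉ P) (hNP : N ⊆ P) (hL : L ⊆ Rt \ N)
    (hLw : ⇑w '' L = L) (hLneg : ∀ β, β ∈ L ↔ -β ∈ L)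
    (hLRw : ConvexRoots Rt (L ∪ invSet P w)) :
    crossIter P w N ∩ L = ∅ := by
  refine Set.eq_empty_of_forall_notMem ?_
  rintro _ ⟨hc, hwv⟩
  obtain ⟨β, hβN, -, n, b, hb, rfl⟩ := Set.mem_iUnion₂.1 hc
  have hvL : β + ∑ i, b i ∈ L := w.injective.mem_set_image.1 (by rwa [hLw])
  have hsum : ∑ i, (Fin.cons (-(β + ∑ i, b i)) b : Fin (n + 1) → V) i = -β := by
    rw [Fin.sum_cons]
    abel
  have hnegβ : -β ∈ L ∪ invSet P w := by
    rw [← hsum]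
    refine hLRw.sum_mem h0 hcrys _ (Fin.cases ?_ fun i => ?_) (Fin.cases ?_ fun i => ?_)
      (hsum ▸ hneg _ (hPRt (hNP hβN)))
    · exact Or.inl ((hLneg _).1 hvL)
    · exact Or.inr (hb i)
    · exact (hL ((hLneg _).1 hvL)).1
    · exact hPRt (invSet_subset P w (hb i))
  exact (hL (mem_of_neg_mem_union_invSet hPneg hLneg (hNP hβN) hnegβ)).2 hβN

end RootSums

theorem cross_avoids_leavener_general {V : Type*} [NormedAddCommGroup V] [InnerProductSpace ℝ V]
    (Rt : Set V) (h0 : (0 : V) ∉ Rt)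
    (hneg : ∀ β ∈ Rt, -β ∈ Rt)
    (hcrys : ∀ β ∈ Rt, ∀ γ ∈ Rt, 0 < (inner ℝ β γ : ℝ) → β - γ ∈ Rt ∨ β - γ = 0)
    (f : V →ₗ[ℝ] ℝ)
    (P : Set V) (hP : P = {β ∈ Rt | 0 < f β})
    (w : V ≃ₗ[ℝ] V)
    (N : Set V) (hNP : N ⊆ P)
    (L : Set V) (hL : L ⊆ Rt \ N)
    (hLw : ⇑w '' L = L) (hLneg : ∀ β, β ∈ L ↔ -β ∈ L)
    (hLRw : ConvexRoots Rt (L ∪ invSet P w)) :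
    crossIter P w N ∩ L = ∅ ∧ CrossSet Rt P w N ∩ L = ∅ := by
  subst hP
  have hPRt : {β ∈ Rt | 0 < f β} ⊆ Rt := fun _ hβ => hβ.1
  have hPneg : ∀ β ∈ {β ∈ Rt | 0 < f β}, -β ∉ {β ∈ Rt | 0 < f β} := fun β hβ hnβ => by
    linarith [hβ.2, (map_neg f β) ▸ hnβ.2]
  exact ⟨crossIter_inter_eq_empty h0 hneg hcrys hPRt hPneg hNP hL hLw hLneg hLRw,
    CrossSet_inter_eq_empty hneg hPRt hPneg hNP hL hLw hLneg hLRw⟩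

/-- For a convex set `𝔑` of positive roots containing `𝔯_w` and a subset
`𝔏 ⊆ 𝔯 \ 𝔑` with `w(𝔏) = 𝔏 = -𝔏` such that `𝔏 ⊔ 𝔯_w` is convex, both `cross_w(𝔑)` and
`Cross_w(𝔑)` are disjoint from `𝔏`. -/
theorem cross_avoids_leavener {V : Type*} [NormedAddCommGroup V] [InnerProductSpace ℝ V]
    (Rt : Set V) (hfin : Rt.Finite) (h0 : (0 : V) ∉ Rt)
    (hneg : ∀ β ∈ Rt, -β ∈ Rt)
    (hcrys : ∀ β ∈ Rt, ∀ γ ∈ Rt, 0 < (inner ℝ β γ : ℝ) → β - γ ∈ Rt ∨ β - γ = 0)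
    (hspan : Submodule.span ℝ Rt = ⊤)
    (f : V →ₗ[ℝ] ℝ) (hf : ∀ β ∈ Rt, f β ≠ 0)
    (P : Set V) (hP : P = {β ∈ Rt | 0 < f β})
    (w : V ≃ₗ[ℝ] V) (hw : ∀ β ∈ Rt, w β ∈ Rt) (hw' : ∀ β ∈ Rt, w.symm β ∈ Rt)
    (N : Set V) (hNP : N ⊆ P) (hconv : ConvexRoots Rt N) (hNw : invSet P w ⊆ N)
    (L : Set V) (hL : L ⊆ Rt \ N)
    (hLw : ⇑w '' L = L) (hLneg : ∀ β, β ∈ L ↔ -β ∈ L)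
    (hLRw : ConvexRoots Rt (L ∪ invSet P w)) :
    crossIter P w N ∩ L = ∅ ∧ CrossSet Rt P w N ∩ L = ∅ :=
  cross_avoids_leavener_general Rt h0 hneg hcrys f P hP w N hNP L hL hLw hLneg hLRw
end

section
/- Let V be a finite free module over a commutative ring, U ⊆ V a direct summand, Π ∈ V ∧ V, U⁰ ⊆ V* the annihilator of U, and Π^#: V* → V the induced map ξ ↦ (ξ ⊗ id)(Π). Then Π^#(U⁰) ⊆ U if and only if Π ∈ U ∧ V; and Π^#(V*) ⊆ U if and only if Π ∈ U ∧ U. -/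
open TensorProduct LinearMap

/-! Write `V = U ⊕ W`, with `p` and `q` the projections onto `U` and `W`. Then
`(ξ ⊗ id) Π ∈ U` iff `q ((ξ ⊗ id) Π) = (ξ ⊗ q) Π` vanishes, and the covectors vanishing on `U`
are exactly those of the form `ξ ∘ q`. As `V` is free, a tensor in `V ⊗ N` is detected by its
contractions against all covectors, so the first condition says `(q ⊗ q) Π = 0` and the second
`(id ⊗ q) Π = 0`. Expanding `id ⊗ id = (p + q) ⊗ (p + q)` identifies the kernel of `q ⊗ q` with
`U ⊗ V + V ⊗ U` and the common kernel of `q ⊗ id` and `id ⊗ q` with `U ⊗ U`; antisymmetry of `Π`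
makes `(q ⊗ id) Π = 0` and `(id ⊗ q) Π = 0` equivalent. -/

section Contraction

variable {R M N A B : Type*} [CommRing R] [AddCommGroup M] [Module R M] [AddCommGroup N]
  [Module R N] [AddCommGroup A] [Module R A] [AddCommGroup B] [Module R B]

theorem lift_lsmul_comp_map_apply (ξ : Module.Dual R M) (f : A →ₗ[R] M) (g : B →ₗ[R] N)
    (t : A ⊗[R] B) :
    lift ((lsmul R N).comp ξ) (map f g t) = g (lift ((lsmul R B).comp (ξ ∘ₗ f)) t) := by
  have : lift ((lsmul R N).comp ξ) ∘ₗ map f g = g ∘ₗ lift ((lsmul R B).comp (ξ ∘ₗ f)) :=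
    TensorProduct.ext' fun a b => by simp
  exact congr($this t)

theorem forall_lift_lsmul_comp_eq_zero_iff [Module.Free R M] (t : M ⊗[R] N) :
    (∀ ξ : Module.Dual R M, lift ((lsmul R N).comp ξ) t = 0) ↔ t = 0 := by
  refine ⟨fun h => ?_, fun ht ξ => by rw [ht, map_zero]⟩
  let b := Module.Free.chooseBasis R M
  have hb (i) : Finsupp.lapply i ∘ₗ (equivFinsuppOfBasisLeft b).toLinearMap =
      lift ((lsmul R N).comp (b.coord i)) :=
    TensorProduct.ext' fun m n => by simp
  apply (equivFinsuppOfBasisLeft b).injective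
  ext i
  simpa using congr($(hb i) t).trans (h (b.coord i))

end Contraction

theorem LinearMap.lTensor_apply_eq_neg_comm_rTensor_apply {R N P : Type*} [CommRing R]
    [AddCommGroup N] [Module R N] [AddCommGroup P] [Module R P] (f : N →ₗ[R] P)
    {t : N ⊗[R] N} (ht : TensorProduct.comm R N N t = -t) :
    f.lTensor N t = -TensorProduct.comm R P N (f.rTensor N t) := by
  rw [← comm_comp_rTensor_comp_comm_eq]
  simp [ht]

theorem TensorProduct.eq_map_add_map_add_map_add_map {R M N : Type*} [CommRing R]
    [AddCommGroup M] [Module R M] [AddCommGroup N] [Module R N] {P Q : M →ₗ[R] M}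
    {P' Q' : N →ₗ[R] N} (hPQ : P + Q = .id) (hPQ' : P' + Q' = .id) (t : M ⊗[R] N) :
    t = map P P' t + map P Q' t + (map Q P' t + map Q Q' t) :=
  calc t = map (P + Q) (P' + Q') t := by rw [hPQ, hPQ', map_id, id_apply]
    _ = _ := by simp only [map_add_left, map_add_right, LinearMap.add_apply]; abel

namespace Submodule

variable {R V : Type*} [CommRing R] [AddCommGroup V] [Module R V] {U W : Submodule R V}

theorem projection_comp_subtype_eq_zero (h : IsCompl U W) :
    W.projection U h.symm ∘ₗ U.subtype = 0 :=
  LinearMap.ext fun u => projection_apply_right h.symm u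

theorem comp_projection_eq_self {P : Type*} [AddCommGroup P] [Module R P] (h : IsCompl U W)
    {ξ : V →ₗ[R] P} (hξ : ∀ u ∈ U, ξ u = 0) : ξ ∘ₗ W.projection U h.symm = ξ :=
  LinearMap.ext fun x => by
    conv_rhs => rw [← projection_add_projection_eq_self h x]
    simp [hξ]

theorem map_projection_mem_range_rTensor_subtype {N N' : Type*} [AddCommGroup N] [Module R N]
    [AddCommGroup N'] [Module R N'] (h : IsCompl U W) (g : N →ₗ[R] N') (t : V ⊗[R] N) :
    TensorProduct.map (U.projection W h) g t ∈ range (U.subtype.rTensor N') :=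
  ⟨TensorProduct.map (U.projectionOnto W h) g t, by rw [← comp_apply, rTensor_comp_map]; rfl⟩

theorem map_projection_mem_range_lTensor_subtype {N N' : Type*} [AddCommGroup N] [Module R N]
    [AddCommGroup N'] [Module R N'] (h : IsCompl U W) (f : N →ₗ[R] N') (t : N ⊗[R] V) :
    TensorProduct.map f (U.projection W h) t ∈ range (U.subtype.lTensor N') :=
  ⟨TensorProduct.map f (U.projectionOnto W h) t, by rw [← comp_apply, lTensor_comp_map]; rfl⟩

theorem sup_range_rTensor_lTensor_subtype_eq_ker (h : IsCompl U W) :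
    range (U.subtype.rTensor V) ⊔ range (U.subtype.lTensor V) =
      ker (TensorProduct.map (W.projection U h.symm) (W.projection U h.symm)) := by
  refine le_antisymm (sup_le ?_ ?_) fun t ht => ?_
  · rw [range_le_ker_iff, map_comp_rTensor, projection_comp_subtype_eq_zero h, map_zero_left]
  · rw [range_le_ker_iff, map_comp_lTensor, projection_comp_subtype_eq_zero h, map_zero_right]
  have hPQ := projection_add_projection_eq_id h
  rw [TensorProduct.eq_map_add_map_add_map_add_map hPQ hPQ t, ht.out, add_zero]
  exact add_mem (add_mem (mem_sup_left (map_projection_mem_range_rTensor_subtype h _ t))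
    (mem_sup_left (map_projection_mem_range_rTensor_subtype h _ t)))
    (mem_sup_right (map_projection_mem_range_lTensor_subtype h _ t))

theorem range_map_subtype_subtype_eq_ker_inf_ker (h : IsCompl U W) :
    range (TensorProduct.map U.subtype U.subtype) =
      ker ((W.projection U h.symm).rTensor V) ⊓ ker ((W.projection U h.symm).lTensor V) := by
  refine le_antisymm (le_inf ?_ ?_) fun t ht => ?_
  · rw [range_le_ker_iff, rTensor_comp_map, projection_comp_subtype_eq_zero h, map_zero_left]
  · rw [range_le_ker_iff, lTensor_comp_map, projection_comp_subtype_eq_zero h, map_zero_right]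
  set P := U.projection W h
  set Q := W.projection U h.symm
  obtain ⟨hr, hl⟩ : Q.rTensor V t = 0 ∧ Q.lTensor V t = 0 := ht
  have hPQ : TensorProduct.map P Q t = 0 := by rw [← rTensor_comp_lTensor, comp_apply, hl, map_zero]
  have hQP : TensorProduct.map Q P t = 0 := by rw [← lTensor_comp_rTensor, comp_apply, hr, map_zero]
  have hQQ : TensorProduct.map Q Q t = 0 := by rw [← rTensor_comp_lTensor, comp_apply, hl, map_zero]
  have hP : P + Q = .id := projection_add_projection_eq_id h
  rw [TensorProduct.eq_map_add_map_add_map_add_map hP hP t, hPQ, hQP, hQQ, add_zero, add_zero,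
    add_zero]
  exact ⟨TensorProduct.map (U.projectionOnto W h) (U.projectionOnto W h) t,
    by rw [← comp_apply, ← TensorProduct.map_comp]; rfl⟩

variable [Module.Free R V]

theorem forall_dualAnnihilator_lift_lsmul_mem_iff (h : IsCompl U W) (t : V ⊗[R] V) :
    (∀ ξ : Module.Dual R V, (∀ u ∈ U, ξ u = 0) → lift ((lsmul R V).comp ξ) t ∈ U) ↔
      TensorProduct.map (W.projection U h.symm) (W.projection U h.symm) t = 0 := by
  rw [← forall_lift_lsmul_comp_eq_zero_iff]
  simp only [lift_lsmul_comp_map_apply]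
  refine ⟨fun H ξ => projection_apply_of_mem_right h.symm (H _ fun u hu => ?_), fun H ξ hξ => ?_⟩
  · rw [comp_apply, projection_apply_of_mem_right h.symm hu, map_zero]
  · rw [← comp_projection_eq_self h hξ]
    exact (projection_apply_eq_zero_iff h.symm).1 (H ξ)

theorem forall_lift_lsmul_mem_iff (h : IsCompl U W) (t : V ⊗[R] V) :
    (∀ ξ : Module.Dual R V, lift ((lsmul R V).comp ξ) t ∈ U) ↔
      (W.projection U h.symm).lTensor V t = 0 := by
  rw [← forall_lift_lsmul_comp_eq_zero_iff]
  simp only [lTensor, lift_lsmul_comp_map_apply, comp_id, ← projection_apply_eq_zero_iff h.symm]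

end Submodule

theorem bivector_musical_characterisation_general {R : Type*} [CommRing R]
    {V : Type*} [AddCommGroup V] [Module R V] [Module.Free R V]
    (U : Submodule R V) (hU : ∃ W : Submodule R V, IsCompl U W)
    (Pi : TensorProduct R V V)
    (hanti : (TensorProduct.comm R V V) Pi = -Pi) :
    ((∀ ξ : Module.Dual R V, (∀ u ∈ U, ξ u = 0) →
        TensorProduct.lift ((LinearMap.lsmul R V).comp ξ) Pi ∈ U) ↔
      Pi ∈ LinearMap.range (TensorProduct.map U.subtype (LinearMap.id (R := R) (M := V))) ⊔
          LinearMap.range (TensorProduct.map (LinearMap.id (R := R) (M := V)) U.subtype)) ∧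
    ((∀ ξ : Module.Dual R V,
        TensorProduct.lift ((LinearMap.lsmul R V).comp ξ) Pi ∈ U) ↔
      Pi ∈ LinearMap.range (TensorProduct.map U.subtype U.subtype)) := by
  obtain ⟨W, hW⟩ := hU
  constructor
  · rw [Submodule.forall_dualAnnihilator_lift_lsmul_mem_iff hW, ← mem_ker,
      ← Submodule.sup_range_rTensor_lTensor_subtype_eq_ker hW]
    rfl
  · rw [Submodule.forall_lift_lsmul_mem_iff hW,
      Submodule.range_map_subtype_subtype_eq_ker_inf_ker hW, Submodule.mem_inf, mem_ker, mem_ker,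
      lTensor_apply_eq_neg_comm_rTensor_apply _ hanti, neg_eq_zero, LinearEquiv.map_eq_zero_iff, and_self]

/-- Let `V` be a finite free module over a commutative ring, `U` a direct
summand, and `Π` an antisymmetric 2-tensor with contraction map
`Π^# : ξ ↦ (ξ ⊗ id)(Π)`.  Then `Π^#(U⁰) ⊆ U` iff `Π ∈ U ∧ V` (i.e. `Π` lies in
`U ⊗ V + V ⊗ U`), and `Π^#(V*) ⊆ U` iff `Π ∈ U ∧ U` (i.e. `Π` lies in `U ⊗ U`). -/
theorem bivector_musical_characterisation {R : Type*} [CommRing R]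
    {V : Type*} [AddCommGroup V] [Module R V] [Module.Finite R V] [Module.Free R V]
    (U : Submodule R V) (hU : ∃ W : Submodule R V, IsCompl U W)
    (Pi : TensorProduct R V V)
    (hanti : (TensorProduct.comm R V V) Pi = -Pi) :
    ((∀ ξ : Module.Dual R V, (∀ u ∈ U, ξ u = 0) →
        TensorProduct.lift ((LinearMap.lsmul R V).comp ξ) Pi ∈ U) ↔
      Pi ∈ LinearMap.range (TensorProduct.map U.subtype (LinearMap.id (R := R) (M := V))) ⊔
          LinearMap.range (TensorProduct.map (LinearMap.id (R := R) (M := V)) U.subtype)) ∧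
    ((∀ ξ : Module.Dual R V,
        TensorProduct.lift ((LinearMap.lsmul R V).comp ξ) Pi ∈ U) ↔
      Pi ∈ LinearMap.range (TensorProduct.map U.subtype U.subtype)) :=
  bivector_musical_characterisation_general U hU Pi hanti
end
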